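/- arXiv:2012.08310 — 3 statements merged into one kernel-verified Lean document; each statement's English description precedes it below -/
import Mathlib

section
/- The set G_k = { M(a) : a ∈ ℂ^k, a_1 ≠ 0 } is a subgroup of GL_k(ℂ): every M(a) with a_1 ≠ 0 is invertible, the identity matrix belongs to G_k, G_k is closed under matrix multiplication, and the inverse of every element of G_k again belongs to G_k. Moreover U_k = { M(a) : a ∈ ℂ^k, a_1 = 1 } is a subgroup of G_k. -/
/-- The matrix `M(a)` with `M(a)_{ij} = Σ_{s_1+⋯+s_i = j, s_l ≥ 1} a_{s_1} ⋯ a_{s_i}`. -/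
noncomputable def Mmat (k : ℕ) (a : Fin k → ℂ) : Matrix (Fin k) (Fin k) ℂ :=
  fun i j =>
    ∑ s ∈ (Finset.Nat.antidiagonalTuple (i.val + 1) (j.val + 1)).filter
        (fun s => ∀ l, 0 < s l),
      ∏ l, (if h : 1 ≤ s l ∧ s l ≤ k then a ⟨s l - 1, by omega⟩ else 0)

/-- `G_k = { M(a) : a_1 ≠ 0 }`. -/
noncomputable def Gset (k : ℕ) [NeZero k] : Set (Matrix (Fin k) (Fin k) ℂ) :=
  {A | ∃ a : Fin k → ℂ, a 0 ≠ 0 ∧ A = Mmat k a}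

/-- `U_k = { M(a) : a_1 = 1 }`. -/
noncomputable def Uset (k : ℕ) [NeZero k] : Set (Matrix (Fin k) (Fin k) ℂ) :=
  {A | ∃ a : Fin k → ℂ, a 0 = 1 ∧ A = Mmat k a}


/-!
Writing `f_a = a₁ X + ⋯ + a_k X^k`, the entry `M(a)_{ij}` is the coefficient of `X^(j+1)` in
`f_a^(i+1)`, so `M(a)` is the matrix of `g ↦ g ∘ f_a` on `X ℂ[X] / X^(k+1)` in the basis
`X, …, X^k`. Hence `M(a) M(b) = M(c)` with `f_c ≡ f_a ∘ f_b` mod `X^(k+1)`, `M(a)` is upper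
triangular with diagonal `a₁^(i+1)`, and the identity is `M(c)` for `f_c = X`. Since `M(c)` has
first row `c`, the inverse of `M(a)` is `M(b)` for `b` the first row of `M(a)⁻¹`.
-/

open Polynomial Finset

namespace Polynomial

variable {R : Type*}

theorem coeff_pow_eq_sum_antidiagonalTuple [CommSemiring R] (p : R[X]) (i j : ℕ) :
    (p ^ i).coeff j = ∑ s ∈ Nat.antidiagonalTuple i j, ∏ l, p.coeff (s l) := by
  rw [← coeff_coe, coe_pow, ← Fin.prod_const, PowerSeries.coeff_prod, finsuppAntidiag, sum_map,
    ← piAntidiag_univ_fin_eq_antidiagonalTuple, ← sum_attach (piAntidiag _ _)]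
  simp only [coeff_coe]
  rfl

theorem coeff_pow_of_lt [CommSemiring R] {p : R[X]} (hp : X ∣ p) {m n : ℕ} (h : m < n) :
    (p ^ n).coeff m = 0 :=
  (X_pow_dvd_iff.mp (pow_dvd_pow_of_dvd hp n)) m h

theorem coeff_pow_self [CommSemiring R] {p : R[X]} (hp : X ∣ p) (n : ℕ) :
    (p ^ n).coeff n = p.coeff 1 ^ n := by
  obtain ⟨q, rfl⟩ := hp
  have h : (X ^ n * q ^ n).coeff (0 + n) = (q ^ n).coeff 0 := coeff_X_pow_mul _ _ _
  have h1 : (X * q).coeff (0 + 1) = q.coeff 0 := coeff_X_mul _ _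
  rw [zero_add] at h h1
  rw [mul_pow, h, h1, coeff_zero_eq_eval_zero, coeff_zero_eq_eval_zero, eval_pow]

theorem X_dvd_comp [CommSemiring R] {p q : R[X]} (hp : X ∣ p) (hq : X ∣ q) :
    X ∣ p.comp q := by
  obtain ⟨s, rfl⟩ := hp
  rw [mul_comp, X_comp]
  exact dvd_mul_of_dvd_left hq _

theorem X_pow_dvd_comp_sub_comp [CommRing R] {p q r : R[X]} {n : ℕ} (h : X ^ n ∣ p - q)
    (hr : X ∣ r) : X ^ n ∣ p.comp r - q.comp r := by
  obtain ⟨s, hs⟩ := h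
  rw [← sub_comp, hs, mul_comp, X_pow_comp]
  exact dvd_mul_of_dvd_left (pow_dvd_pow_of_dvd hr n) _

theorem coeff_eq_of_X_pow_dvd_sub [Ring R] {p q : R[X]} {n d : ℕ} (h : X ^ n ∣ p - q)
    (hd : d < n) : p.coeff d = q.coeff d := by
  rw [← sub_eq_zero, ← coeff_sub]
  exact X_pow_dvd_iff.mp h d hd

theorem coeff_pow_eq_of_X_pow_dvd_sub [CommRing R] {p q : R[X]} {n d : ℕ} (h : X ^ n ∣ p - q)
    (m : ℕ) (hd : d < n) : (p ^ m).coeff d = (q ^ m).coeff d :=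
  coeff_eq_of_X_pow_dvd_sub (h.trans (sub_dvd_pow_sub_pow p q m)) hd

end Polynomial

namespace Mmat

variable {k : ℕ}

noncomputable def toPoly (a : Fin k → ℂ) : ℂ[X] :=
  ∑ l, C (a l) * X ^ (l.val + 1)

def ofPoly (k : ℕ) (p : ℂ[X]) : Fin k → ℂ :=
  fun l => p.coeff (l.val + 1)

theorem coeff_toPoly (a : Fin k → ℂ) (n : ℕ) :
    (toPoly a).coeff n = if h : 1 ≤ n ∧ n ≤ k then a ⟨n - 1, by omega⟩ else 0 := by
  simp only [toPoly, finsetSum_coeff, coeff_C_mul_X_pow]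
  split_ifs with h
  · rw [sum_eq_single ⟨n - 1, by omega⟩ (fun l _ hl => if_neg ?_) (by simp)]
    · rw [if_pos (by simp; omega)]
    · exact fun hn => hl (Fin.ext (by simp; omega))
  · exact sum_eq_zero fun l _ => if_neg (by omega)

theorem X_dvd_toPoly (a : Fin k → ℂ) : X ∣ toPoly a :=
  X_dvd_iff.mpr (by rw [coeff_toPoly, dif_neg (by omega)])

theorem toPoly_comp (a : Fin k → ℂ) (q : ℂ[X]) :
    (toPoly a).comp q = ∑ l, C (a l) * q ^ (l.val + 1) := by
  simp [toPoly, Polynomial.sum_comp]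

theorem X_pow_dvd_sub_toPoly_ofPoly {p : ℂ[X]} (hp : X ∣ p) :
    X ^ (k + 1) ∣ p - toPoly (ofPoly k p) := by
  refine X_pow_dvd_iff.mpr fun d hd => ?_
  rw [coeff_sub, coeff_toPoly, sub_eq_zero]
  split_ifs with h
  · simp only [ofPoly]
    congr 1
    omega
  · obtain rfl : d = 0 := by omega
    exact X_dvd_iff.mp hp

end Mmat

open Mmat

section

variable {k : ℕ}

theorem Mmat_apply (a : Fin k → ℂ) (i j : Fin k) :
    Mmat k a i j = (toPoly a ^ (i.val + 1)).coeff (j.val + 1) := by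
  simp only [Mmat, coeff_pow_eq_sum_antidiagonalTuple, coeff_toPoly]
  refine sum_filter_of_ne fun s _ hs l => Nat.pos_of_ne_zero fun hl => hs ?_
  exact prod_eq_zero (mem_univ l) (by simp [hl])

theorem Mmat_apply_zero [NeZero k] (a : Fin k → ℂ) : Mmat k a 0 = a := by
  ext j
  rw [Mmat_apply, Fin.val_zero, zero_add, pow_one, coeff_toPoly, dif_pos (by omega)]
  rfl

theorem Mmat_apply_of_lt (a : Fin k → ℂ) {i j : Fin k} (h : j < i) : Mmat k a i j = 0 := by
  rw [Mmat_apply]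
  exact coeff_pow_of_lt (X_dvd_toPoly a) (Nat.succ_lt_succ h)

theorem Mmat_apply_self [NeZero k] (a : Fin k → ℂ) (i : Fin k) :
    Mmat k a i i = a 0 ^ (i.val + 1) := by
  rw [Mmat_apply, coeff_pow_self (X_dvd_toPoly a), coeff_toPoly, dif_pos ⟨le_rfl, NeZero.one_le⟩]
  rfl

theorem isUnit_Mmat [NeZero k] {a : Fin k → ℂ} (ha : a 0 ≠ 0) : IsUnit (Mmat k a) := by
  have htri : (Mmat k a).IsUpperTriangular := fun _ _ h => Mmat_apply_of_lt a h
  rw [Matrix.isUnit_iff_isUnit_det, Matrix.det_of_isUpperTriangular htri, isUnit_iff_ne_zero]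
  exact prod_ne_zero_iff.mpr fun i _ => by rw [Mmat_apply_self]; exact pow_ne_zero _ ha

theorem Mmat_ofPoly_apply {p : ℂ[X]} (hp : X ∣ p) (i j : Fin k) :
    Mmat k (ofPoly k p) i j = (p ^ (i.val + 1)).coeff (j.val + 1) := by
  rw [Mmat_apply]
  exact (coeff_pow_eq_of_X_pow_dvd_sub (X_pow_dvd_sub_toPoly_ofPoly hp) _
    (Nat.succ_lt_succ j.isLt)).symm

theorem Mmat_ofPoly_X : Mmat k (ofPoly k X) = 1 := by
  ext i j
  rw [Mmat_ofPoly_apply dvd_rfl, coeff_X_pow, Matrix.one_apply]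
  simp [Fin.ext_iff, eq_comm]

theorem Mmat_mul_Mmat (a b : Fin k → ℂ) :
    Mmat k a * Mmat k b = Mmat k (ofPoly k ((toPoly a).comp (toPoly b))) := by
  ext i j
  rw [Mmat_ofPoly_apply (X_dvd_comp (X_dvd_toPoly a) (X_dvd_toPoly b)), ← pow_comp]
  calc (Mmat k a * Mmat k b) i j
      = ((toPoly (ofPoly k (toPoly a ^ (i.val + 1)))).comp (toPoly b)).coeff (j.val + 1) := by
        simp [Matrix.mul_apply, toPoly_comp, finsetSum_coeff, Mmat_apply, ofPoly]
    _ = ((toPoly a ^ (i.val + 1)).comp (toPoly b)).coeff (j.val + 1) := by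
        have htrunc := X_pow_dvd_sub_toPoly_ofPoly (k := k)
          (dvd_pow (X_dvd_toPoly a) i.val.succ_ne_zero)
        exact (coeff_eq_of_X_pow_dvd_sub (X_pow_dvd_comp_sub_comp htrunc (X_dvd_toPoly b))
          (Nat.succ_lt_succ j.isLt)).symm

theorem Mmat_mul_Mmat_apply_zero_zero [NeZero k] (a b : Fin k → ℂ) :
    (Mmat k a * Mmat k b) 0 0 = a 0 * b 0 := by
  rw [Matrix.mul_apply, sum_eq_single_of_mem 0 (mem_univ _) fun m _ hm => ?_]
  · simp [Mmat_apply_self]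
  · rw [Mmat_apply_of_lt b (Fin.pos_iff_ne_zero.mpr hm), mul_zero]

theorem ofPoly_comp_toPoly_zero [NeZero k] (a b : Fin k → ℂ) :
    ofPoly k ((toPoly a).comp (toPoly b)) 0 = a 0 * b 0 := by
  rw [← Mmat_mul_Mmat_apply_zero_zero, Mmat_mul_Mmat, Mmat_apply_zero]

theorem inv_Mmat [NeZero k] {a : Fin k → ℂ} (ha : a 0 ≠ 0) :
    (Mmat k a)⁻¹ = Mmat k ((Mmat k a)⁻¹ 0) := by
  set A := Mmat k a
  have hA : IsUnit A.det := (Matrix.isUnit_iff_isUnit_det A).mp (isUnit_Mmat ha)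
  refine Matrix.inv_eq_left_inv ?_
  have hc : ofPoly k ((toPoly (A⁻¹ 0)).comp (toPoly a)) = ofPoly k X :=
    calc _ = (Mmat k (A⁻¹ 0) * A) 0 := by rw [Mmat_mul_Mmat, Mmat_apply_zero]
      _ = (A⁻¹ * A) 0 := by ext l; simp only [Matrix.mul_apply, Mmat_apply_zero]
      _ = Mmat k (ofPoly k X) 0 := by rw [Matrix.nonsing_inv_mul _ hA, Mmat_ofPoly_X]
      _ = ofPoly k X := Mmat_apply_zero _
  rw [Mmat_mul_Mmat, hc, Mmat_ofPoly_X]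

theorem inv_Mmat_apply_zero_zero [NeZero k] {a : Fin k → ℂ} (ha : a 0 ≠ 0) :
    (Mmat k a)⁻¹ 0 0 = (a 0)⁻¹ := by
  have hA : IsUnit (Mmat k a).det := (Matrix.isUnit_iff_isUnit_det _).mp (isUnit_Mmat ha)
  have h := Mmat_mul_Mmat_apply_zero_zero ((Mmat k a)⁻¹ 0) a
  rw [← inv_Mmat ha, Matrix.nonsing_inv_mul _ hA, Matrix.one_apply_eq] at h
  exact eq_inv_of_mul_eq_one_left h.symm

end

/-- `G_k` is a subgroup of `GL_k(ℂ)`: every `M(a)` with `a_1 ≠ 0` is invertible, the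
identity belongs to `G_k`, `G_k` is closed under multiplication and inversion; and
`U_k` is a subgroup of `G_k`. -/
theorem Gset_Uset_subgroup (k : ℕ) [NeZero k] :
    (∀ A ∈ Gset k, IsUnit A) ∧
    (1 ∈ Gset k) ∧
    (∀ A ∈ Gset k, ∀ B ∈ Gset k, A * B ∈ Gset k) ∧
    (∀ A ∈ Gset k, A⁻¹ ∈ Gset k) ∧
    (Uset k ⊆ Gset k) ∧
    (1 ∈ Uset k) ∧
    (∀ A ∈ Uset k, ∀ B ∈ Uset k, A * B ∈ Uset k) ∧
    (∀ A ∈ Uset k, A⁻¹ ∈ Uset k) := by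
  have hX : ofPoly k X 0 = 1 := by simp [ofPoly]
  refine ⟨?_, ⟨_, hX ▸ one_ne_zero, Mmat_ofPoly_X.symm⟩, ?_, ?_, ?_, ⟨_, hX, Mmat_ofPoly_X.symm⟩,
    ?_, ?_⟩
  · rintro _ ⟨a, ha, rfl⟩
    exact isUnit_Mmat ha
  · rintro _ ⟨a, ha, rfl⟩ _ ⟨b, hb, rfl⟩
    exact ⟨_, by rw [ofPoly_comp_toPoly_zero]; exact mul_ne_zero ha hb, Mmat_mul_Mmat a b⟩
  · rintro _ ⟨a, ha, rfl⟩
    exact ⟨_, by rw [inv_Mmat_apply_zero_zero ha]; exact inv_ne_zero ha, inv_Mmat ha⟩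
  · rintro _ ⟨a, ha, rfl⟩
    exact ⟨a, ha ▸ one_ne_zero, rfl⟩
  · rintro _ ⟨a, ha, rfl⟩ _ ⟨b, hb, rfl⟩
    exact ⟨_, by rw [ofPoly_comp_toPoly_zero, ha, hb, mul_one], Mmat_mul_Mmat a b⟩
  · rintro _ ⟨a, ha, rfl⟩
    have ha' : a 0 ≠ 0 := ha ▸ one_ne_zero
    exact ⟨_, by rw [inv_Mmat_apply_zero_zero ha', ha, inv_one], inv_Mmat ha'⟩
end

section
/- (Theorem 4.1.) Every Cartan subalgebra of the Lie algebra g_k is abelian (commutative). -/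
/-- The matrix `e_s` with `(e_s)_{i,j} = i` if `j = i + s - 1` and `0` otherwise. -/
def Emat (k s : ℕ) : Matrix (Fin k) (Fin k) ℂ :=
  fun i j => if (j : ℕ) + 1 = (i : ℕ) + s then ((i : ℕ) + 1 : ℂ) else 0

/-- `g_k = span_ℂ{e_1, …, e_k}`. -/
noncomputable def gkAlg (k : ℕ) : Submodule ℂ (Matrix (Fin k) (Fin k) ℂ) :=
  Submodule.span ℂ (Emat k '' {s | 1 ≤ s ∧ s ≤ k})

/-- The lower central series of a subspace `H` with respect to the commutator bracket. -/
noncomputable def lcsOf (k : ℕ) (H : Submodule ℂ (Matrix (Fin k) (Fin k) ℂ)) :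
    ℕ → Submodule ℂ (Matrix (Fin k) (Fin k) ℂ)
  | 0 => H
  | n + 1 => Submodule.span ℂ {z | ∃ x ∈ H, ∃ y ∈ lcsOf k H n, z = x * y - y * x}

/-! Write `X ∈ g_k` as `∑ cₙ e_{n+1}`, the `cₙ` being read off the first row. Since
`[e_{a+1}, e_{b+1}] = (a - b) e_{a+b+1}`, the spans `F_d` of `e_{d+1}, …, e_k` satisfy
`[F_p, F_q] ⊆ F_{p+q}`, and `ad x` acts on the lowest term of an element of `F_m` by
`-m c₀(x)`. If some element of `H` has an `e_1`-term, nilpotency then forces `H` to be a line;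
otherwise `H ⊆ F_1`, and `H` is strictly contained in its normalizer. -/

lemma Emat_eq_zero_of_lt {k s : ℕ} (h : k < s) : Emat k s = 0 := by
  ext i j
  simp only [Emat, Matrix.zero_apply, ite_eq_right_iff]
  omega

lemma Emat_mul_Emat (k s t : ℕ) :
    Emat k (s + 1) * Emat k (t + 1) = Matrix.of fun (i j : Fin k) =>
      if (j : ℕ) = i + s + t then ((i : ℕ) + 1 : ℂ) * ((i : ℕ) + s + 1) else 0 := by
  ext i j
  rw [Matrix.mul_apply, Matrix.of_apply]
  split_ifs with h
  · have hl : (i : ℕ) + s < k := by omega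
    rw [Fintype.sum_eq_single ⟨(i : ℕ) + s, hl⟩ fun l hl => ?_]
    · simp only [Emat]
      rw [if_pos (by omega), if_pos (by omega)]
      push_cast
      ring
    · have : (l : ℕ) ≠ i + s := fun h => hl (Fin.ext h)
      simp only [Emat]
      rw [if_neg (by omega), zero_mul]
  · refine Finset.sum_eq_zero fun l _ => ?_
    simp only [Emat]
    split_ifs <;> first | omega | simp

lemma Emat_bracket (k s t : ℕ) :
    Emat k (s + 1) * Emat k (t + 1) - Emat k (t + 1) * Emat k (s + 1) =
      ((s : ℂ) - t) • Emat k (s + t + 1) := by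
  rw [Emat_mul_Emat, Emat_mul_Emat]
  ext i j
  simp only [Matrix.sub_apply, Matrix.smul_apply, Matrix.of_apply, Emat, smul_eq_mul]
  by_cases h : (j : ℕ) = i + s + t
  · rw [if_pos h, if_pos (by omega), if_pos (by omega)]
    ring
  · rw [if_neg h, if_neg (by omega), if_neg (by omega)]
    ring

lemma gkAlg.bracket_mem {k : ℕ} {X Y : Matrix (Fin k) (Fin k) ℂ} (hX : X ∈ gkAlg k)
    (hY : Y ∈ gkAlg k) : X * Y - Y * X ∈ gkAlg k := by
  let bracket : Matrix (Fin k) (Fin k) ℂ →ₗ[ℂ] Matrix (Fin k) (Fin k) ℂ →ₗ[ℂ] _ :=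
    LinearMap.mul ℂ _ - (LinearMap.mul ℂ _).flip
  have hmem := Submodule.apply_mem_map₂ bracket hX hY
  rw [gkAlg, Submodule.map₂_span_span] at hmem
  refine Submodule.span_le.2 ?_ hmem
  rintro _ ⟨_, ⟨s, ⟨hs, -⟩, rfl⟩, _, ⟨t, ⟨ht, -⟩, rfl⟩, rfl⟩
  obtain ⟨s, rfl⟩ := Nat.exists_eq_add_of_le' hs
  obtain ⟨t, rfl⟩ := Nat.exists_eq_add_of_le' ht
  simp only [bracket, LinearMap.sub_apply, LinearMap.mul_apply', LinearMap.flip_apply,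
    Emat_bracket]
  refine Submodule.smul_mem _ _ ?_
  by_cases h : s + t + 1 ≤ k
  · exact Submodule.subset_span ⟨s + t + 1, ⟨by omega, h⟩, rfl⟩
  · rw [Emat_eq_zero_of_lt (by omega)]
    exact Submodule.zero_mem _

lemma iterate_bracket_mem_lcsOf {k : ℕ} {H : Submodule ℂ (Matrix (Fin k) (Fin k) ℂ)}
    {x z : Matrix (Fin k) (Fin k) ℂ} (hx : x ∈ H) (hz : z ∈ H) (n : ℕ) :
    (fun w => x * w - w * x)^[n] z ∈ lcsOf k H n := by
  induction n with
  | zero => exact hz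
  | succ n ih =>
    rw [Function.iterate_succ_apply']
    exact Submodule.subset_span ⟨x, hx, _, ih, rfl⟩

namespace gkAlg

open Finset

variable {k : ℕ} [NeZero k]

/-- The coefficient of `e_{n+1}`, read off the first row and extended by `0` for `n ≥ k`. -/
def coeff (X : Matrix (Fin k) (Fin k) ℂ) (n : ℕ) : ℂ :=
  if h : n < k then X 0 ⟨n, h⟩ else 0

@[simp]
lemma coeff_fin (X : Matrix (Fin k) (Fin k) ℂ) (j : Fin k) : coeff X j = X 0 j :=
  dif_pos j.isLt

lemma coeff_of_le {n : ℕ} (X : Matrix (Fin k) (Fin k) ℂ) (h : k ≤ n) : coeff X n = 0 :=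
  dif_neg (by omega)

@[simp]
lemma coeff_zero_matrix (n : ℕ) : coeff (0 : Matrix (Fin k) (Fin k) ℂ) n = 0 := by
  unfold coeff; split_ifs <;> rfl

@[simp]
lemma coeff_add (X Y : Matrix (Fin k) (Fin k) ℂ) (n : ℕ) :
    coeff (X + Y) n = coeff X n + coeff Y n := by
  unfold coeff; split_ifs <;> simp

@[simp]
lemma coeff_sub (X Y : Matrix (Fin k) (Fin k) ℂ) (n : ℕ) :
    coeff (X - Y) n = coeff X n - coeff Y n := by
  unfold coeff; split_ifs <;> simp

@[simp]
lemma coeff_smul (a : ℂ) (X : Matrix (Fin k) (Fin k) ℂ) (n : ℕ) :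
    coeff (a • X) n = a * coeff X n := by
  unfold coeff; split_ifs <;> simp

lemma apply_eq_coeff {X : Matrix (Fin k) (Fin k) ℂ} (hX : X ∈ gkAlg k) (i j : Fin k) :
    X i j = if (i : ℕ) ≤ j then ((i : ℕ) + 1) * coeff X (j - i) else 0 := by
  induction hX using Submodule.span_induction with
  | mem x hx =>
    obtain ⟨s, ⟨hs, -⟩, rfl⟩ := hx
    simp only [Emat, coeff]
    rw [dif_pos (by omega)]
    simp only [Fin.val_zero, zero_add, Nat.cast_zero]
    split_ifs <;> first | omega | simp
  | zero => simp
  | add x y _ _ hx hy =>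
    simp only [Matrix.add_apply, hx, hy, coeff_add]
    split_ifs <;> ring
  | smul a x _ hx =>
    simp only [Matrix.smul_apply, hx, coeff_smul, smul_eq_mul]
    split_ifs <;> ring

lemma eq_zero_of_coeff_eq_zero {X : Matrix (Fin k) (Fin k) ℂ} (hX : X ∈ gkAlg k)
    (h : ∀ n, coeff X n = 0) : X = 0 := by
  ext i j
  rw [apply_eq_coeff hX, h, mul_zero, ite_self, Matrix.zero_apply]

lemma coeff_mul {Y : Matrix (Fin k) (Fin k) ℂ} (X : Matrix (Fin k) (Fin k) ℂ) (hY : Y ∈ gkAlg k)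
    {n : ℕ} (hn : n < k) :
    coeff (X * Y) n = ∑ p ∈ antidiagonal n, ((p.1 : ℂ) + 1) * coeff X p.1 * coeff Y p.2 := by
  have hfin : ∀ l : Fin k, X 0 l * Y l ⟨n, hn⟩ =
      if (l : ℕ) ≤ n then ((l : ℕ) + 1) * coeff X l * coeff Y (n - l) else 0 := by
    intro l
    rw [apply_eq_coeff hY, coeff_fin]
    split_ifs
    · ring
    · rw [mul_zero]
  rw [coeff, dif_pos hn, Matrix.mul_apply, Fintype.sum_congr _ _ hfin,
    Fin.sum_univ_eq_sum_range (fun l => if l ≤ n then ((l : ℂ) + 1) * coeff X l * coeff Y (n - l)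
      else 0),
    Nat.sum_antidiagonal_eq_sum_range_succ (fun a b => ((a : ℂ) + 1) * coeff X a * coeff Y b),
    ← sum_range_add_sum_Ico _ (by omega : n + 1 ≤ k), sum_eq_zero (s := Ico _ _)]
  · rw [add_zero]
    exact sum_congr rfl fun l hl => if_pos (Nat.lt_succ_iff.mp (mem_range.mp hl))
  · intro l hl
    exact if_neg (by simp only [mem_Ico] at hl; omega)

lemma coeff_bracket {X Y : Matrix (Fin k) (Fin k) ℂ} (hX : X ∈ gkAlg k) (hY : Y ∈ gkAlg k)
    {n : ℕ} (hn : n < k) :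
    coeff (X * Y - Y * X) n =
      ∑ p ∈ antidiagonal n, ((p.1 : ℂ) - p.2) * coeff X p.1 * coeff Y p.2 := by
  rw [coeff_sub, coeff_mul X hY hn, coeff_mul Y hX hn,
    ← Nat.sum_antidiagonal_swap (f := fun p => ((p.1 : ℂ) + 1) * coeff Y p.1 * coeff X p.2),
    ← sum_sub_distrib]
  refine sum_congr rfl fun p _ => ?_
  simp only [Prod.fst_swap, Prod.snd_swap]
  ring

/-- The filtration `F_d = span{e_{d+1}, …, e_k}` of `g_k`. -/
def fil (k : ℕ) [NeZero k] (d : ℕ) : Submodule ℂ (Matrix (Fin k) (Fin k) ℂ) where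
  carrier := {X | X ∈ gkAlg k ∧ ∀ n < d, coeff X n = 0}
  add_mem' hX hY := ⟨add_mem hX.1 hY.1, fun n hn => by simp [hX.2 n hn, hY.2 n hn]⟩
  zero_mem' := ⟨zero_mem _, fun n _ => coeff_zero_matrix n⟩
  smul_mem' a _ hX := ⟨Submodule.smul_mem _ a hX.1, fun n hn => by simp [hX.2 n hn]⟩

lemma mem_fil {d : ℕ} {X : Matrix (Fin k) (Fin k) ℂ} :
    X ∈ fil k d ↔ X ∈ gkAlg k ∧ ∀ n < d, coeff X n = 0 := Iff.rfl

lemma mem_fil_zero {X : Matrix (Fin k) (Fin k) ℂ} : X ∈ fil k 0 ↔ X ∈ gkAlg k := by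
  simp [mem_fil]

lemma mem_fil_one {X : Matrix (Fin k) (Fin k) ℂ} :
    X ∈ fil k 1 ↔ X ∈ gkAlg k ∧ coeff X 0 = 0 := by
  simp [mem_fil]

lemma fil_self : fil k k = ⊥ := by
  refine (Submodule.eq_bot_iff _).2 fun X hX => eq_zero_of_coeff_eq_zero hX.1 fun n => ?_
  rcases lt_or_ge n k with hn | hn
  · exact hX.2 n hn
  · exact coeff_of_le X hn

lemma bracket_mem_fil {p q : ℕ} {X Y : Matrix (Fin k) (Fin k) ℂ} (hX : X ∈ fil k p)
    (hY : Y ∈ fil k q) : X * Y - Y * X ∈ fil k (p + q) := by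
  refine ⟨bracket_mem hX.1 hY.1, fun n hn => ?_⟩
  rcases lt_or_ge n k with hnk | hnk
  · rw [coeff_bracket hX.1 hY.1 hnk]
    refine sum_eq_zero fun ab hab => ?_
    rw [HasAntidiagonal.mem_antidiagonal] at hab
    rcases lt_or_ge ab.1 p with ha | ha
    · rw [hX.2 _ ha, mul_zero, zero_mul]
    · rw [hY.2 _ (by omega), mul_zero]
  · exact coeff_of_le _ hnk

lemma coeff_bracket_of_mem_fil {m : ℕ} {X Y : Matrix (Fin k) (Fin k) ℂ} (hX : X ∈ gkAlg k)
    (hY : Y ∈ fil k m) (hm : m < k) :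
    coeff (X * Y - Y * X) m = -(m * coeff X 0 * coeff Y m) := by
  rw [coeff_bracket hX hY.1 hm, sum_eq_single (0, m)]
  · push_cast
    ring
  · intro ab hab hne
    rw [HasAntidiagonal.mem_antidiagonal] at hab
    have hb : ab.2 < m := by
      by_contra! hb
      exact hne (Prod.ext (by omega) (by omega))
    rw [hY.2 _ hb, mul_zero]
  · simp

lemma coeff_iterate_bracket {m : ℕ} {x z : Matrix (Fin k) (Fin k) ℂ} (hx : x ∈ gkAlg k)
    (hz : z ∈ fil k m) (hm : m < k) (n : ℕ) :
    (fun w => x * w - w * x)^[n] z ∈ fil k m ∧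
      coeff ((fun w => x * w - w * x)^[n] z) m = (-(m * coeff x 0)) ^ n * coeff z m := by
  induction n with
  | zero => exact ⟨hz, by simp⟩
  | succ n ih =>
    rw [Function.iterate_succ_apply']
    refine ⟨?_, ?_⟩
    · simpa using bracket_mem_fil (mem_fil_zero.2 hx) ih.1
    · rw [coeff_bracket_of_mem_fil hx ih.1 hm, ih.2]
      ring

lemma exists_mem_fil_coeff_ne_zero {X : Matrix (Fin k) (Fin k) ℂ} (hX : X ∈ gkAlg k)
    (h : X ≠ 0) : ∃ m < k, X ∈ fil k m ∧ coeff X m ≠ 0 := by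
  classical
  have hex : ∃ n, coeff X n ≠ 0 := by
    by_contra! h0
    exact h (eq_zero_of_coeff_eq_zero hX h0)
  refine ⟨Nat.find hex, ?_, ⟨hX, fun n hn => not_not.1 (Nat.find_min hex hn)⟩, Nat.find_spec hex⟩
  by_contra! hk
  exact Nat.find_spec hex (coeff_of_le X hk)

variable {H : Submodule ℂ (Matrix (Fin k) (Fin k) ℂ)}

/-- Take `d` maximal with `F_d ⊄ H`: any `w ∈ F_d \ H` normalizes `H`, as
`[F_d, F_1] ⊆ F_{d+1} ⊆ H`. -/
lemma exists_mem_normalizer_not_mem (hH : H ≤ fil k 1) :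
    ∃ w ∈ gkAlg k, (∀ y ∈ H, w * y - y * w ∈ H) ∧ w ∉ H := by
  have hfil_zero : ¬ fil k 0 ≤ H := fun h => by
    have he : Emat k 1 ∈ fil k 0 :=
      mem_fil_zero.2 (Submodule.subset_span ⟨1, ⟨le_rfl, NeZero.one_le⟩, rfl⟩)
    simpa [Emat, coeff, NeZero.ne] using (mem_fil_one.1 (hH (h he))).2
  obtain ⟨d, hd, hd_succ⟩ :=
    Nat.exists_not_and_succ_of_not_zero_of_exists (p := fun d => fil k d ≤ H) hfil_zero
      ⟨k, by simp [fil_self]⟩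
  obtain ⟨w, hw, hwH⟩ := SetLike.not_le_iff_exists.1 hd
  exact ⟨w, hw.1, fun y hy => hd_succ (bracket_mem_fil hw (hH hy)), hwH⟩

/-- `z := y - c • x` has no `e_1`-term; its lowest term, of degree `m > 0`, is an eigenvector
of `ad x` modulo `F_{m+1}` for the eigenvalue `-m * coeff x 0 ≠ 0`, so `(ad x)^N z ≠ 0`,
against nilpotency. -/
lemma eq_smul_of_coeff_ne_zero {N : ℕ} (hH : H ≤ gkAlg k) (hN : lcsOf k H N = ⊥)
    {x y : Matrix (Fin k) (Fin k) ℂ} (hx : x ∈ H) (hx0 : coeff x 0 ≠ 0) (hy : y ∈ H) :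
    y = (coeff y 0 / coeff x 0) • x := by
  set z := y - (coeff y 0 / coeff x 0) • x
  have hzH : z ∈ H := H.sub_mem hy (H.smul_mem _ hx)
  by_contra hne
  obtain ⟨m, hm, hzm, hzm0⟩ := exists_mem_fil_coeff_ne_zero (hH hzH) (sub_ne_zero.2 hne)
  have hm0 : m ≠ 0 := by
    rintro rfl
    exact hzm0 (by simp [z, div_mul_cancel₀ _ hx0])
  have hiter := (coeff_iterate_bracket (hH hx) hzm hm N).2
  have hlcs := iterate_bracket_mem_lcsOf hx hzH N
  rw [hN, Submodule.mem_bot] at hlcs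
  rw [hlcs, coeff_zero_matrix] at hiter
  exact mul_ne_zero (pow_ne_zero _ (by simp [hm0, hx0])) hzm0 hiter.symm

end gkAlg

theorem cartan_subalgebras_abelian_general (k : ℕ) [NeZero k]
    (H : Submodule ℂ (Matrix (Fin k) (Fin k) ℂ))
    (hsub : (H : Set (Matrix (Fin k) (Fin k) ℂ)) ⊆ (gkAlg k : Set _))
    (hnilp : ∃ N : ℕ, lcsOf k H N = ⊥)
    (hself : {x | x ∈ gkAlg k ∧ ∀ y ∈ H, x * y - y * x ∈ H}
        = (H : Set (Matrix (Fin k) (Fin k) ℂ))) :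
    ∀ x ∈ H, ∀ y ∈ H, x * y = y * x := by
  by_cases hH : ∃ x ∈ H, gkAlg.coeff x 0 ≠ 0
  · obtain ⟨x, hx, hx0⟩ := hH
    obtain ⟨N, hN⟩ := hnilp
    intro a ha b hb
    rw [gkAlg.eq_smul_of_coeff_ne_zero hsub hN hx hx0 ha,
      gkAlg.eq_smul_of_coeff_ne_zero hsub hN hx hx0 hb]
    exact (((Commute.refl x).smul_left _).smul_right _).eq
  · push Not at hH
    obtain ⟨w, hw, hnorm, hwH⟩ :=
      gkAlg.exists_mem_normalizer_not_mem fun y hy => gkAlg.mem_fil_one.2 ⟨hsub hy, hH y hy⟩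
    exact absurd (hself ▸ ⟨hw, hnorm⟩ : w ∈ (H : Set _)) hwH

/-- Every Cartan subalgebra of `g_k` — i.e. every bracket-closed subspace `H ⊆ g_k`
that is nilpotent (lower central series reaches zero) and equal to its own normalizer
in `g_k` — is abelian. -/
theorem cartan_subalgebras_abelian (k : ℕ) [NeZero k]
    (H : Submodule ℂ (Matrix (Fin k) (Fin k) ℂ))
    (hsub : (H : Set (Matrix (Fin k) (Fin k) ℂ)) ⊆ (gkAlg k : Set _))
    (hclosed : ∀ x ∈ H, ∀ y ∈ H, x * y - y * x ∈ H)
    (hnilp : ∃ N : ℕ, lcsOf k H N = ⊥)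
    (hself : {x | x ∈ gkAlg k ∧ ∀ y ∈ H, x * y - y * x ∈ H}
        = (H : Set (Matrix (Fin k) (Fin k) ℂ))) :
    ∀ x ∈ H, ∀ y ∈ H, x * y = y * x :=
  cartan_subalgebras_abelian_general k H hsub hnilp hself
end

section
/- (Finiteness of the Weyl group, Theorem 4.2 item 2.) The normalizer of the torus T in G_k equals T: if A ∈ G_k satisfies A·T·A⁻¹ = T, then A ∈ T. In particular the Weyl group W = N_{G_k}(T)/Z_{G_k}(T) of the adjoint action of G_k is trivial, hence finite. -/
/-- The maximal torus `T = { diag(λ, λ², …, λ^k) : λ ∈ ℂ* }`. -/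
def Tset (k : ℕ) : Set (Matrix (Fin k) (Fin k) ℂ) :=
  {A | ∃ lam : ℂ, lam ≠ 0 ∧ A = Matrix.diagonal (fun i : Fin k => lam ^ (i.val + 1))}

lemma Mmat_lt_eq_zero (k : ℕ) (a : Fin k → ℂ) (i j : Fin k) (hij : j.val < i.val) :
    Mmat k a i j = 0 := by
  unfold Mmat
  apply Finset.sum_eq_zero
  intro s hs
  exfalso
  rw [Finset.mem_filter, Finset.Nat.mem_antidiagonalTuple] at hs
  obtain ⟨hsum, hpos⟩ := hs
  have h1 : ∑ m : Fin (i.val + 1), (1 : ℕ) ≤ ∑ m, s m :=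
    Finset.sum_le_sum fun m _ => hpos m
  simp only [Finset.sum_const, Finset.card_univ, Fintype.card_fin, smul_eq_mul, mul_one]
    at h1
  omega

lemma Mmat_diag (k : ℕ) [NeZero k] (a : Fin k → ℂ) (i : Fin k) :
    Mmat k a i i = (a 0) ^ (i.val + 1) := by
  have hk : 1 ≤ k := NeZero.one_le
  unfold Mmat
  have hset : (Finset.Nat.antidiagonalTuple (i.val + 1) (i.val + 1)).filter
      (fun s => ∀ l, 0 < s l) = {fun _ => 1} := by
    ext s
    simp only [Finset.mem_filter, Finset.Nat.mem_antidiagonalTuple, Finset.mem_singleton]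
    constructor
    · rintro ⟨hsum, hpos⟩
      funext l
      by_contra h
      have h2 : 2 ≤ s l := by have := hpos l; omega
      have hlt : ∑ m : Fin (i.val + 1), (1 : ℕ) < ∑ m, s m :=
        Finset.sum_lt_sum (fun m _ => hpos m) ⟨l, Finset.mem_univ l, by omega⟩
      simp only [Finset.sum_const, Finset.card_univ, Fintype.card_fin, smul_eq_mul,
        mul_one, hsum] at hlt
      omega
    · rintro rfl
      refine ⟨?_, fun l => one_pos⟩
      simp
  rw [hset, Finset.sum_singleton]
  have hterm : ∀ l : Fin (i.val + 1),
      (if h : 1 ≤ (fun _ : Fin (i.val + 1) => 1) l ∧ (fun _ : Fin (i.val + 1) => 1) l ≤ k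
        then a ⟨(fun _ : Fin (i.val + 1) => 1) l - 1, by omega⟩ else 0) = a 0 := by
    intro l
    rw [dif_pos ⟨le_refl 1, hk⟩]
    exact congrArg a (Fin.ext rfl)
  rw [Finset.prod_congr rfl fun l _ => hterm l]
  simp

/-- Finiteness of the Weyl group: the normalizer of the torus `T` in `G_k` equals `T`
(any `A ∈ G_k` with `A·T·A⁻¹ = T` lies in `T`), and `T` centralizes itself; hence the
Weyl group `W = N_{G_k}(T)/Z_{G_k}(T)` is trivial, in particular finite. -/
theorem normalizer_torus_eq_torus (k : ℕ) [NeZero k] :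
    (∀ A ∈ Gset k, (fun C => A * C * A⁻¹) '' Tset k = Tset k → A ∈ Tset k) ∧
    (∀ A ∈ Tset k, ∀ C ∈ Tset k, A * C = C * A) := by
  constructor
  · rintro A ⟨a, ha0, rfl⟩ hIm
    set A := Mmat k a with hA
    -- A is upper triangular with nonzero diagonal
    have htri : A.BlockTriangular id := fun i j h => Mmat_lt_eq_zero k a i j h
    have hdiag : ∀ i, A i i = (a 0) ^ (i.val + 1) := Mmat_diag k a
    have hdet : A.det ≠ 0 := by
      rw [Matrix.det_of_upperTriangular htri]
      exact Finset.prod_ne_zero_iff.2 fun i _ => by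
        rw [hdiag i]; exact pow_ne_zero _ ha0
    have hinv : A⁻¹ * A = 1 := Matrix.nonsing_inv_mul A (isUnit_iff_ne_zero.mpr hdet)
    -- D2 ∈ T, so A D2 A⁻¹ ∈ T
    have hD2 : (Matrix.diagonal fun i : Fin k => (2 : ℂ) ^ (i.val + 1)) ∈ Tset k :=
      ⟨2, two_ne_zero, rfl⟩
    have hmem : A * Matrix.diagonal (fun i : Fin k => (2 : ℂ) ^ (i.val + 1)) * A⁻¹
        ∈ Tset k := by
      rw [← hIm]
      exact Set.mem_image_of_mem _ hD2
    obtain ⟨μ, hμ0, hμ⟩ := hmem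
    have hEq : A * Matrix.diagonal (fun i : Fin k => (2 : ℂ) ^ (i.val + 1))
        = Matrix.diagonal (fun i : Fin k => μ ^ (i.val + 1)) * A := by
      have h2 := congrArg (fun M => M * A) hμ
      simpa [Matrix.mul_assoc, hinv] using h2
    have hent : ∀ i j : Fin k,
        A i j * (2 : ℂ) ^ (j.val + 1) = μ ^ (i.val + 1) * A i j := by
      intro i j
      have := congrFun (congrFun hEq i) j
      simpa [Matrix.mul_diagonal, Matrix.diagonal_mul] using this
    -- μ = 2
    have hμpow : ∀ i : Fin k, μ ^ (i.val + 1) = (2 : ℂ) ^ (i.val + 1) := by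
      intro i
      have h := hent i i
      have hAii : A i i ≠ 0 := by rw [hdiag i]; exact pow_ne_zero _ ha0
      have : A i i * (2 : ℂ) ^ (i.val + 1) = A i i * μ ^ (i.val + 1) := by
        rw [h]; ring
      exact (mul_left_cancel₀ hAii this).symm
    -- off-diagonal entries vanish
    have hoff : ∀ i j : Fin k, i ≠ j → A i j = 0 := by
      intro i j hij
      have h := hent i j
      rw [hμpow i] at h
      have hpow : (2 : ℂ) ^ (j.val + 1) ≠ (2 : ℂ) ^ (i.val + 1) := by
        intro hcon
        have : ((2 ^ (j.val + 1) : ℕ) : ℂ) = ((2 ^ (i.val + 1) : ℕ) : ℂ) := by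
          push_cast; exact hcon
        have := Nat.cast_injective this
        have := Nat.pow_right_injective (le_refl 2) this
        exact hij (Fin.ext (by omega))
      have : A i j * ((2 : ℂ) ^ (j.val + 1) - (2 : ℂ) ^ (i.val + 1)) = 0 := by
        rw [mul_sub, h]; ring
      rcases mul_eq_zero.mp this with h0 | h0
      · exact h0
      · exact absurd (sub_eq_zero.mp h0) hpow
    refine ⟨a 0, ha0, ?_⟩
    ext i j
    by_cases hij : i = j
    · subst hij
      rw [hdiag i, Matrix.diagonal_apply_eq]
    · rw [hoff i j hij, Matrix.diagonal_apply_ne _ hij]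
  · rintro A ⟨lam, _, rfl⟩ C ⟨mu, _, rfl⟩
    have hfun : (fun i : Fin k => lam ^ (i.val + 1) * mu ^ (i.val + 1))
        = fun i : Fin k => mu ^ (i.val + 1) * lam ^ (i.val + 1) := by
      funext i; ring
    rw [Matrix.diagonal_mul_diagonal, Matrix.diagonal_mul_diagonal, hfun]
end
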